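/- arXiv:0811.2587 — 6 statements merged into one kernel-verified Lean document; each statement's English description precedes it below -/
import Mathlib

section
/- The function ũ(t̃,x̃) = (1+γ)x̃ + ln|1+γ| with γ < -1 satisfies the PDE e^{x̃} u_t = (e^{x̃} u_x)_x + e^{-γx̃} e^{u}; i.e., for all t̃, x̃: e^{x̃}·∂_t ũ = ∂_x(e^{x̃}·∂_x ũ) + e^{-γx̃}·e^{ũ}. -/
/-!
The solution does not depend on `t`, so the left-hand side vanishes. Since `u_x = 1 + γ`, the
diffusion term is `(1 + γ) eˣ`, while `e^{-γx} eᵘ = eˣ |1 + γ| = -(1 + γ) eˣ` because `1 + γ < 0`;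
the two cancel.
-/

open Real

lemma deriv_affine (a b x : ℝ) : deriv (fun y => a * y + b) x = a := by
  simp

lemma deriv_exp_mul_const (c x : ℝ) : deriv (fun y => exp y * c) x = exp x * c :=
  ((hasDerivAt_exp x).mul_const c).deriv

lemma exp_neg_mul_mul_exp_affine_log_abs {γ : ℝ} (hγ : 1 + γ ≠ 0) (x : ℝ) :
    exp (-γ * x) * exp ((1 + γ) * x + log |1 + γ|) = exp x * |1 + γ| := by
  rw [exp_add, exp_log (abs_pos.mpr hγ), ← mul_assoc, ← exp_add]
  ring_nf

/-- u(t,x) = (1+γ)x + ln|1+γ| with γ < -1 solves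
    e^x u_t = (e^x u_x)_x + e^{-γx} e^u. -/
theorem stmt0 (γ : ℝ) (hγ : γ < -1)
    (u : ℝ → ℝ → ℝ)
    (hu : ∀ t x, u t x = (1 + γ) * x + Real.log |1 + γ|) :
    ∀ t x : ℝ,
      Real.exp x * deriv (fun s => u s x) t =
        deriv (fun y => Real.exp y * deriv (fun y' => u t y') y) x
          + Real.exp (-γ * x) * Real.exp (u t x) := by
  intro t x
  have hu_t : (fun s => u s x) = fun _ => (1 + γ) * x + log |1 + γ| := funext fun s => hu s x
  have hu_x (y : ℝ) : deriv (fun y' => u t y') y = 1 + γ := by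
    simp only [hu t]
    exact deriv_affine _ _ _
  have hflux : (fun y => exp y * deriv (fun y' => u t y') y) = fun y => exp y * (1 + γ) :=
    funext fun y => by rw [hu_x]
  rw [hu_t, deriv_const, hflux, deriv_exp_mul_const, hu t x,
    exp_neg_mul_mul_exp_affine_log_abs (by linarith), abs_of_neg (by linarith : 1 + γ < 0)]
  ring
end

section
/- For γ ≠ -1 and any constant c, the function ũ(t̃,x̃) = (1+γ)x̃ + ln|(1+γ)/(e^{-(t̃+c)(1+γ)} - 1)| satisfies e^{x̃} ũ_t = (e^{x̃} ũ_x)_x + e^{-γx̃} e^{ũ} on the region where e^{-(t̃+c)(1+γ)} - 1 and 1+γ have the same (positive) sign. -/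
/-!
Separate variables: `u = k x + g t` with `k = 1 + γ` and `g = log (k / (E - 1))`, `E = exp (-(t + c) k)`.
Then `(exp x * u_x)_x = k exp x` and `exp (-γ x) exp u = exp x * exp g`, so the equation reduces to the
ODE `g' = k + exp g`, which holds because `g' = k E / (E - 1) = k + k / (E - 1)` and `exp g = k / (E - 1)`.
-/

open Real

theorem hasDerivAt_log_div_exp_sub_one {k c t : ℝ} (hk : k ≠ 0)
    (ht : exp (-(t + c) * k) - 1 ≠ 0) :
    HasDerivAt (fun s => log (k / (exp (-(s + c) * k) - 1)))
      (k + k / (exp (-(t + c) * k) - 1)) t := by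
  have hE : HasDerivAt (fun s => exp (-(s + c) * k) - 1) (exp (-(t + c) * k) * -k) t := by
    have hlin : HasDerivAt (fun s => -(s + c) * k) (-k) t := by
      simpa using ((hasDerivAt_id t).add_const c).neg.mul_const k
    exact hlin.exp.sub_const 1
  convert (((hasDerivAt_const t k).fun_div hE ht).log (div_ne_zero hk ht)) using 1
  generalize exp (-(t + c) * k) = E at ht ⊢
  field_simp
  ring

theorem deriv_exp_mul_deriv_affine (k b x : ℝ) :
    deriv (fun y => exp y * deriv (fun y' => k * y' + b) y) x = exp x * k := by
  simp

theorem stmt2_general (γ c : ℝ) (hγ' : 1 + γ > 0)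
    (u : ℝ → ℝ → ℝ)
    (hu : ∀ t x, u t x =
      (1 + γ) * x + Real.log ((1 + γ) / (Real.exp (-(t + c) * (1 + γ)) - 1))) :
    ∀ t x : ℝ, Real.exp (-(t + c) * (1 + γ)) - 1 > 0 →
      Real.exp x * deriv (fun s => u s x) t =
        deriv (fun y => Real.exp y * deriv (fun y' => u t y') y) x
          + Real.exp (-γ * x) * Real.exp (u t x) := by
  intro t x ht
  have hut : HasDerivAt (fun s => u s x)
      (1 + γ + (1 + γ) / (exp (-(t + c) * (1 + γ)) - 1)) t := by
    simp only [hu]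
    exact (hasDerivAt_log_div_exp_sub_one hγ'.ne' ht.ne').const_add _
  have hux : (fun y => u t y) =
      fun y => (1 + γ) * y + log ((1 + γ) / (exp (-(t + c) * (1 + γ)) - 1)) :=
    funext (hu t)
  have hsource : exp (-γ * x) * exp (u t x) =
      exp x * ((1 + γ) / (exp (-(t + c) * (1 + γ)) - 1)) := by
    rw [hu, exp_add, exp_log (div_pos hγ' ht), ← mul_assoc, ← exp_add]
    ring_nf
  rw [hut.deriv, hux, deriv_exp_mul_deriv_affine, hsource]
  ring

/-- u(t,x) = (1+γ)x + ln((1+γ)/(e^{-(t+c)(1+γ)} - 1)) solves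
    e^x u_t = (e^x u_x)_x + e^{-γx} e^u on the region where the denominator is positive. -/
theorem stmt2 (γ c : ℝ) (hγ : γ ≠ -1) (hγ' : 1 + γ > 0)
    (u : ℝ → ℝ → ℝ)
    (hu : ∀ t x, u t x =
      (1 + γ) * x + Real.log ((1 + γ) / (Real.exp (-(t + c) * (1 + γ)) - 1))) :
    ∀ t x : ℝ, Real.exp (-(t + c) * (1 + γ)) - 1 > 0 →
      Real.exp x * deriv (fun s => u s x) t =
        deriv (fun y => Real.exp y * deriv (fun y' => u t y') y) x
          + Real.exp (-γ * x) * Real.exp (u t x) :=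
  stmt2_general γ c hγ' u hu
end

section
/- Suppose u solves f(x)u_t = (f(x)u_x)_x + h(x)e^{u} (with f, h smooth, f·h nowhere zero) and set v(t,x) = u(t,x) + ω(x) with ω = ln|h/f|. Then v solves v_t = v_{xx} + F(x)v_x + ε e^{v} + H(x), where F = f'/f, H = -ω'' - ω'F, and ε = sign(f·h). -/
/-- if u solves f u_t = (f u_x)_x + h e^u with f·h > 0,
    then v = u + ln(h/f) solves v_t = v_xx + F v_x + e^v + H,
    where F = f'/f and H = -ω'' - ω'F with ω = ln(h/f). -/
theorem stmt10 (f h : ℝ → ℝ) (hf : ContDiff ℝ (⊤ : ℕ∞) f) (hh : ContDiff ℝ (⊤ : ℕ∞) h)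
    (hfh : ∀ x, f x * h x > 0)
    (u : ℝ → ℝ → ℝ) (hu : ContDiff ℝ (⊤ : ℕ∞) (Function.uncurry u))
    (hpde : ∀ t x, f x * deriv (fun s => u s x) t =
      deriv (fun y => f y * deriv (fun y' => u t y') y) x + h x * Real.exp (u t x))
    (ω : ℝ → ℝ) (hω : ∀ x, ω x = Real.log (h x / f x))
    (v : ℝ → ℝ → ℝ) (hv : ∀ t x, v t x = u t x + ω x)
    (F H : ℝ → ℝ)
    (hF : ∀ x, F x = deriv f x / f x)
    (hH : ∀ x, H x = -(deriv (deriv ω)) x - deriv ω x * F x) :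
    ∀ t x, deriv (fun s => v s x) t =
      deriv (deriv (fun y => v t y)) x + F x * deriv (fun y => v t y) x
        + Real.exp (v t x) + H x := by
  intro t x
  have hfne : ∀ y, f y ≠ 0 := by
    intro y
    intro h0
    have := hfh y
    rw [h0, zero_mul] at this
    exact lt_irrefl 0 this
  have hpos : ∀ y, 0 < h y / f y := by
    intro y
    have hy := hfne y
    have : h y / f y = (f y * h y) / (f y ^ 2) := by
      field_simp
    rw [this]
    exact div_pos (hfh y) (by positivity)
  -- ω is smooth
  have hωfun : ω = fun y => Real.log (h y / f y) := funext hω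
  have hωsm : ContDiff ℝ (⊤ : ℕ∞) ω := by
    rw [contDiff_iff_contDiffAt]
    intro y
    rw [hωfun]
    exact (Real.contDiffAt_log.2 (ne_of_gt (hpos y))).comp y
      (((hh.of_le le_rfl).contDiffAt).div ((hf.of_le le_rfl).contDiffAt) (hfne y))
  have hω'sm : ContDiff ℝ (⊤ : ℕ∞) (deriv ω) := by
    have := ContDiff.iterate_deriv 1 hωsm
    simpa using this
  -- slice of u is smooth
  have hg : ContDiff ℝ (⊤ : ℕ∞) (fun y => u t y) := by
    have : (fun y => u t y) = Function.uncurry u ∘ (fun y => (t, y)) :=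
      rfl
    rw [this]
    exact (hu.of_le (by simp)).comp (contDiff_const.prodMk contDiff_id)
  have hg' : ContDiff ℝ (⊤ : ℕ∞) (deriv (fun y => u t y)) := by
    have := ContDiff.iterate_deriv 1 hg
    simpa using this
  -- time derivative of v
  have ht : deriv (fun s => v s x) t = deriv (fun s => u s x) t := by
    have : (fun s => v s x) = (fun s => u s x + ω x) := by
      funext s; exact hv s x
    rw [this, deriv_add_const]
  -- first space derivative of v
  have hx1 : ∀ y, deriv (fun y' => v t y') y
      = deriv (fun y' => u t y') y + deriv ω y := by
    intro y
    have hvfun : (fun y' => v t y') = (fun y' => u t y' + ω y') := by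
      funext y'; exact hv t y'
    rw [hvfun]
    exact deriv_fun_add (hg.differentiable (by simp) y)
      (hωsm.differentiable (by simp) y)
  -- second space derivative of v
  have hx2 : deriv (deriv (fun y => v t y)) x
      = deriv (deriv (fun y => u t y)) x + deriv (deriv ω) x := by
    have : deriv (fun y => v t y)
        = (fun y => deriv (fun y' => u t y') y + deriv ω y) := funext hx1
    rw [this]
    exact deriv_fun_add (hg'.differentiable (by simp) x)
      (hω'sm.differentiable (by simp) x)
  -- expand the product rule in the PDE
  have hprod : deriv (fun y => f y * deriv (fun y' => u t y') y) x
      = deriv f x * deriv (fun y => u t y) x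
        + f x * deriv (deriv (fun y => u t y)) x := by
    exact deriv_fun_mul ((hf.of_le (by simp)).differentiable (n := (⊤ : ℕ∞)) (by simp) x)
      (hg'.differentiable (by simp) x)
  have hpde' := hpde t x
  rw [hprod] at hpde'
  -- exponential identity
  have hexp : Real.exp (v t x) = Real.exp (u t x) * (h x / f x) := by
    rw [hv t x, hω x, Real.exp_add, Real.exp_log (hpos x)]
  rw [ht, hx2, hexp, hF, hH, hF]
  rw [hx1 x]
  have hfx := hfne x
  field_simp
  nlinarith [hpde']
end

section
/- The equation v_t = v_{xx} + λ v_x + ε e^{v} admits the scaling symmetry: if v solves it, then w(t,x) = v(c² t, c x + λ(c - c²)t) + 2 ln c solves the same equation for any c > 0. -/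
private lemma line_deriv (F : ℝ × ℝ → ℝ) (hF : ContDiff ℝ (⊤ : ℕ∞) F)
    (a b d e s : ℝ) :
    HasDerivAt (fun u => F (a*u+b, d*u+e)) (fderiv ℝ F (a*s+b, d*s+e) (a, d)) s := by
  have h1 : HasDerivAt (fun u : ℝ => a*u+b) a s := by
    simpa using ((hasDerivAt_id s).const_mul a).add_const b
  have h2 : HasDerivAt (fun u : ℝ => d*u+e) d s := by
    simpa using ((hasDerivAt_id s).const_mul d).add_const e
  have hp : HasDerivAt (fun u : ℝ => ((a*u+b, d*u+e) : ℝ × ℝ)) ((a, d) : ℝ × ℝ) s :=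
    h1.prodMk h2
  exact ((hF.differentiable (by simp) (a*s+b, d*s+e)).hasFDerivAt).comp_hasDerivAt s hp

/-- if v solves v_t = v_xx + λ v_x + ε e^v, then so does
    w(t,x) = v(c²t, cx + λ(c - c²)t) + 2 ln c for any c > 0. -/
theorem stmt14 (lam ε c : ℝ) (hc : 0 < c)
    (v : ℝ → ℝ → ℝ) (hv : ContDiff ℝ (⊤ : ℕ∞) (Function.uncurry v))
    (hpde : ∀ t x, deriv (fun s => v s x) t =
      deriv (deriv (fun y => v t y)) x + lam * deriv (fun y => v t y) x
        + ε * Real.exp (v t x))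
    (w : ℝ → ℝ → ℝ)
    (hw : ∀ t x, w t x = v (c ^ 2 * t) (c * x + lam * (c - c ^ 2) * t) + 2 * Real.log c) :
    ∀ t x, deriv (fun s => w s x) t =
      deriv (deriv (fun y => w t y)) x + lam * deriv (fun y => w t y) x
        + ε * Real.exp (w t x) := by
  have hf : ContDiff ℝ (⊤ : ℕ∞) (Function.uncurry v) := hv
  set f := Function.uncurry v with hfdef
  have hfv : ∀ a b : ℝ, f (a, b) = v a b := fun a b => rfl
  have hg : ContDiff ℝ (⊤ : ℕ∞) (fun p : ℝ × ℝ => fderiv ℝ f p ((0:ℝ), (1:ℝ))) :=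
    (hf.fderiv_right (by simp)).clm_apply contDiff_const
  set g := fun p : ℝ × ℝ => fderiv ℝ f p ((0:ℝ), (1:ℝ)) with hgdef
  -- first partial in x of v
  have hvx : ∀ a b : ℝ, deriv (fun y => v a y) b = g (a, b) := by
    intro a b
    have heq : (fun y => v a y) = (fun u => f ((0:ℝ)*u+a, (1:ℝ)*u+0)) := by
      funext u; rw [hfv]; ring_nf
    rw [heq, (line_deriv f hf 0 a 1 0 b).deriv]
    norm_num [hgdef]
  -- first partial in t of v
  have hvt : ∀ a b : ℝ, deriv (fun s => v s b) a = fderiv ℝ f (a, b) ((1:ℝ), (0:ℝ)) := by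
    intro a b
    have heq : (fun s => v s b) = (fun u => f ((1:ℝ)*u+0, (0:ℝ)*u+b)) := by
      funext u; rw [hfv]; ring_nf
    rw [heq, (line_deriv f hf 1 0 0 b a).deriv]
    norm_num
  -- second partial in x of v
  have hvxx : ∀ a b : ℝ, deriv (deriv (fun y => v a y)) b = fderiv ℝ g (a, b) ((0:ℝ),(1:ℝ)) := by
    intro a b
    have heq : deriv (fun y => v a y) = (fun u => g ((0:ℝ)*u+a, (1:ℝ)*u+0)) := by
      funext u; rw [hvx a u]; norm_num
    rw [heq, (line_deriv g hg 0 a 1 0 b).deriv]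
    norm_num
  intro t x
  -- time derivative of w
  have h1 : deriv (fun s => w s x) t
      = fderiv ℝ f (c^2*t, c*x + lam*(c-c^2)*t) ((c^2 : ℝ), lam*(c-c^2)) := by
    have heq : (fun s => w s x)
        = (fun u => f (c^2*u+0, (lam*(c-c^2))*u + c*x) + 2*Real.log c) := by
      funext u; rw [hw, hfv]; ring_nf
    rw [heq, deriv_add_const, ((line_deriv f hf (c^2) 0 (lam*(c-c^2)) (c*x) t)).deriv]
    have hpt : ((c^2*t+0, lam*(c-c^2)*t + c*x) : ℝ × ℝ)
        = (c^2*t, c*x + lam*(c-c^2)*t) := by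
      simp only [Prod.mk.injEq]; constructor <;> ring_nf
    rw [hpt]
  -- x derivative of w, as a function
  have h2 : deriv (fun z => w t z) = fun y => c * g ((0:ℝ)*y + c^2*t, c*y + lam*(c-c^2)*t) := by
    funext y
    have heq : (fun z => w t z)
        = (fun u => f ((0:ℝ)*u + c^2*t, c*u + lam*(c-c^2)*t) + 2*Real.log c) := by
      funext u; rw [hw, hfv]; ring_nf
    rw [heq, deriv_add_const, ((line_deriv f hf 0 (c^2*t) c (lam*(c-c^2)*t) y)).deriv]
    have hvec : (((0:ℝ), c) : ℝ × ℝ) = c • (((0:ℝ), (1:ℝ)) : ℝ × ℝ) := by simp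
    rw [hvec, map_smul, smul_eq_mul]
  -- second x derivative of w
  have h3 : deriv (deriv (fun z => w t z)) x
      = c * (c * fderiv ℝ g (c^2*t, c*x + lam*(c-c^2)*t) ((0:ℝ),(1:ℝ))) := by
    rw [h2]
    have h := ((line_deriv g hg 0 (c^2*t) c (lam*(c-c^2)*t) x).const_mul c).deriv
    rw [h]
    have hpt : (((0:ℝ)*x + c^2*t, c*x + lam*(c-c^2)*t) : ℝ × ℝ)
        = (c^2*t, c*x + lam*(c-c^2)*t) := by
      simp only [Prod.mk.injEq, and_true]; ring_nf
    rw [hpt]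
    have hvec : (((0:ℝ), c) : ℝ × ℝ) = c • (((0:ℝ), (1:ℝ)) : ℝ × ℝ) := by simp
    rw [hvec, map_smul, smul_eq_mul]
  -- split the time-derivative vector
  have hsplit : fderiv ℝ f (c^2*t, c*x + lam*(c-c^2)*t) ((c^2 : ℝ), lam*(c-c^2))
      = c^2 * fderiv ℝ f (c^2*t, c*x + lam*(c-c^2)*t) ((1:ℝ),(0:ℝ))
        + lam*(c-c^2) * g (c^2*t, c*x + lam*(c-c^2)*t) := by
    have hvec : (((c^2 : ℝ), lam*(c-c^2)) : ℝ × ℝ)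
        = c^2 • (((1:ℝ),(0:ℝ)) : ℝ × ℝ) + (lam*(c-c^2)) • (((0:ℝ),(1:ℝ)) : ℝ × ℝ) := by
      simp
    rw [hvec, map_add, map_smul, map_smul, smul_eq_mul, smul_eq_mul]
  -- PDE at the shifted point
  have hpde' : fderiv ℝ f (c^2*t, c*x + lam*(c-c^2)*t) ((1:ℝ),(0:ℝ))
      = fderiv ℝ g (c^2*t, c*x + lam*(c-c^2)*t) ((0:ℝ),(1:ℝ))
        + lam * g (c^2*t, c*x + lam*(c-c^2)*t)
        + ε * Real.exp (v (c^2*t) (c*x + lam*(c-c^2)*t)) := by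
    have := hpde (c^2*t) (c*x + lam*(c-c^2)*t)
    rwa [hvt, hvx, hvxx] at this
  -- finish
  rw [h1, h3, hsplit, h2, hw]
  simp only []
  have hx0 : (0:ℝ)*x + c^2*t = c^2*t := by ring
  rw [hx0]
  have hexp : Real.exp (v (c^2*t) (c*x + lam*(c-c^2)*t) + 2*Real.log c)
      = Real.exp (v (c^2*t) (c*x + lam*(c-c^2)*t)) * c^2 := by
    rw [Real.exp_add, two_mul, Real.exp_add, Real.exp_log hc]; ring
  rw [hexp]
  linear_combination (c^2) * hpde'
end

section
/- The equation v_t = v_{xx} + μx·v_x + ε e^{v} + 2μ (Case 5) is invariant under the finite transformation generated by e^{-μt}∂_x: if v solves it, then w(t,x) := v(t, x + a e^{-μt}) solves it for any constant a. -/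
/-- if v solves v_t = v_xx + μx v_x + ε e^v + 2μ, then so does
    w(t,x) = v(t, x + a e^{-μt}). -/
theorem stmt15 (μ ε a : ℝ)
    (v : ℝ → ℝ → ℝ) (hv : ContDiff ℝ (⊤ : ℕ∞) (Function.uncurry v))
    (hpde : ∀ t x, deriv (fun s => v s x) t =
      deriv (deriv (fun y => v t y)) x + μ * x * deriv (fun y => v t y) x
        + ε * Real.exp (v t x) + 2 * μ)
    (w : ℝ → ℝ → ℝ)
    (hw : ∀ t x, w t x = v t (x + a * Real.exp (-μ * t))) :
    ∀ t x, deriv (fun s => w s x) t =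
      deriv (deriv (fun y => w t y)) x + μ * x * deriv (fun y => w t y) x
        + ε * Real.exp (w t x) + 2 * μ := by
  intro t x
  set F := Function.uncurry v with hF
  have hFd : Differentiable ℝ F := hv.differentiable (by simp)
  set c : ℝ := a * Real.exp (-μ * t) with hc
  set ξ : ℝ := x + c with hξ
  -- partial derivatives via fderiv
  have hdx : ∀ y : ℝ, deriv (fun z => v t z) y = fderiv ℝ F (t, y) (0, 1) := by
    intro y
    have hcurve : HasDerivAt (fun z : ℝ => ((t, z) : ℝ × ℝ)) (0, 1) y :=
      HasDerivAt.prodMk (hasDerivAt_const y t) (hasDerivAt_id y)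
    exact ((hFd (t, y)).hasFDerivAt.comp_hasDerivAt y hcurve).deriv
  have hdt : ∀ y s : ℝ, deriv (fun r => v r y) s = fderiv ℝ F (s, y) (1, 0) := by
    intro y s
    have hcurve : HasDerivAt (fun r : ℝ => ((r, y) : ℝ × ℝ)) (1, 0) s :=
      HasDerivAt.prodMk (hasDerivAt_id s) (hasDerivAt_const s y)
    exact ((hFd (s, y)).hasFDerivAt.comp_hasDerivAt s hcurve).deriv
  -- time derivative of w
  have h1 : HasDerivAt (fun s : ℝ => -μ * s) (-μ) t := by
    simpa using (hasDerivAt_id t).const_mul (-μ)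
  have h2 : HasDerivAt (fun s : ℝ => Real.exp (-μ * s)) (Real.exp (-μ * t) * (-μ)) t := h1.exp
  have h3 : HasDerivAt (fun s : ℝ => x + a * Real.exp (-μ * s))
      (a * (Real.exp (-μ * t) * (-μ))) t := (h2.const_mul a).const_add x
  have hcurve : HasDerivAt (fun s : ℝ => ((s, x + a * Real.exp (-μ * s)) : ℝ × ℝ))
      (1, a * (Real.exp (-μ * t) * (-μ))) t := HasDerivAt.prodMk (hasDerivAt_id t) h3
  have hwt : deriv (fun s => w s x) t
      = fderiv ℝ F (t, ξ) (1, a * (Real.exp (-μ * t) * (-μ))) := by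
    have hcomp := ((hFd (t, ξ)).hasFDerivAt.comp_hasDerivAt t hcurve)
    have : (fun s => w s x) = fun s => F (s, x + a * Real.exp (-μ * s)) := by
      funext s; rw [hw]; rfl
    rw [this]
    exact hcomp.deriv
  have hsplit : fderiv ℝ F (t, ξ) (1, a * (Real.exp (-μ * t) * (-μ)))
      = fderiv ℝ F (t, ξ) (1, 0) + (a * (Real.exp (-μ * t) * (-μ))) * fderiv ℝ F (t, ξ) (0, 1) := by
    have : ((1, a * (Real.exp (-μ * t) * (-μ))) : ℝ × ℝ)
        = (1, 0) + (a * (Real.exp (-μ * t) * (-μ))) • (0, 1) := by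
      simp [Prod.ext_iff]
    rw [this, map_add, map_smul]
    simp [smul_eq_mul]
  -- spatial derivatives of w
  have hwfun : (fun y => w t y) = fun y => v t (y + c) := by
    funext y; rw [hw]
  have hwx : ∀ y, deriv (fun y => w t y) y = deriv (fun z => v t z) (y + c) := by
    intro y
    rw [hwfun]
    exact deriv_comp_add_const (fun z => v t z) c y
  have hwxx : deriv (deriv (fun y => w t y)) x = deriv (deriv (fun z => v t z)) ξ := by
    have : deriv (fun y => w t y) = fun y => deriv (fun z => v t z) (y + c) := funext hwx
    rw [this, deriv_comp_add_const]
  -- conclude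
  have hpdeξ := hpde t ξ
  rw [hwt, hsplit, hdt ξ t] at *
  rw [hwxx, hwx x, hw t x]
  rw [hpdeξ, hdx ξ]
  simp only [hξ, hc]
  ring_nf
end

section
/- Let f, g > 0 and consider the equation f(x)u_t = (g(x)u_x)_x + h(x)e^{mu}. If φ(x) = ∫₀ˣ √(f(s)/g(s)) ds and u solves this equation, then ũ(t,x̃) := m·u(t, φ⁻¹(x̃)) solves f̃ ũ_t = (f̃ ũ_x̃)_x̃ + h̃ e^{ũ}, where f̃(x̃) = √(f·g)(φ⁻¹(x̃)) and h̃(x̃) = m·√(g/f)·h at φ⁻¹(x̃). -/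
/-- with f, g > 0, φ(x) = ∫₀ˣ √(f/g), ψ = φ⁻¹, and u solving
    f u_t = (g u_x)_x + h e^{mu}, the function uT(t,y) = m·u(t, ψ y) solves
    fT uT_t = (fT uT_y)_y + hT e^{uT} with fT = √(f·g)∘ψ and hT = m·(√(g/f)·h)∘ψ. -/
theorem stmt17 (f g h : ℝ → ℝ)
    (hf : ContDiff ℝ (⊤ : ℕ∞) f) (hg : ContDiff ℝ (⊤ : ℕ∞) g) (hh : ContDiff ℝ (⊤ : ℕ∞) h)
    (hfpos : ∀ x, 0 < f x) (hgpos : ∀ x, 0 < g x)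
    (m : ℝ) (hm : m ≠ 0)
    (u : ℝ → ℝ → ℝ) (hu : ContDiff ℝ (⊤ : ℕ∞) (Function.uncurry u))
    (hpde : ∀ t x, f x * deriv (fun s => u s x) t =
      deriv (fun y => g y * deriv (fun y' => u t y') y) x
        + h x * Real.exp (m * u t x))
    (φ ψ : ℝ → ℝ)
    (hφ : ∀ x, φ x = ∫ s in (0:ℝ)..x, Real.sqrt (f s / g s))
    (hψ : ContDiff ℝ (⊤ : ℕ∞) ψ)
    (hinv₁ : ∀ x, ψ (φ x) = x) (hinv₂ : ∀ y, φ (ψ y) = y)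
    (uT : ℝ → ℝ → ℝ) (huT : ∀ t y, uT t y = m * u t (ψ y))
    (fT hT : ℝ → ℝ)
    (hfT : ∀ y, fT y = Real.sqrt (f (ψ y) * g (ψ y)))
    (hhT : ∀ y, hT y = m * Real.sqrt (g (ψ y) / f (ψ y)) * h (ψ y)) :
    ∀ t y, fT y * deriv (fun s => uT s y) t =
      deriv (fun z => fT z * deriv (fun z' => uT t z') z) y
        + hT y * Real.exp (uT t y) := by
  -- basic smoothness facts
  have hut : ∀ t, ContDiff ℝ (⊤ : ℕ∞) (fun x => u t x) := fun t =>
    hu.comp (contDiff_const.prodMk contDiff_id)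
  have hus : ∀ x, ContDiff ℝ (⊤ : ℕ∞) (fun s => u s x) := fun x =>
    hu.comp (contDiff_id.prodMk contDiff_const)
  have hux : ∀ t, ContDiff ℝ ((⊤:ℕ∞):WithTop ℕ∞) (deriv (fun x => u t x)) := fun t =>
    (contDiff_infty_iff_deriv.mp ((hut t).of_le (by simp))).2
  -- derivative of φ
  have hcont : Continuous (fun s => Real.sqrt (f s / g s)) :=
    (hf.continuous.div hg.continuous (fun x => (hgpos x).ne')).sqrt
  have hφ' : ∀ x, HasDerivAt φ (Real.sqrt (f x / g x)) x := by
    intro x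
    have := intervalIntegral.integral_hasDerivAt_right
      (hcont.intervalIntegrable 0 x)
      (hcont.stronglyMeasurableAtFilter _ _) hcont.continuousAt
    have hfun : φ = fun x => ∫ s in (0:ℝ)..x, Real.sqrt (f s / g s) := funext hφ
    rw [hfun]; exact this
  -- derivative of ψ
  have hψ' : ∀ y, HasDerivAt ψ (Real.sqrt (g (ψ y) / f (ψ y))) y := by
    intro y
    have hψd : HasDerivAt ψ (deriv ψ y) y :=
      (hψ.differentiable (by simp) y).hasDerivAt
    have hcomp : HasDerivAt (fun z => φ (ψ z))
        (Real.sqrt (f (ψ y) / g (ψ y)) * deriv ψ y) y :=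
      (hφ' (ψ y)).comp y hψd
    have hid : (fun z => φ (ψ z)) = fun z => z := funext hinv₂
    rw [hid] at hcomp
    have h1 : Real.sqrt (f (ψ y) / g (ψ y)) * deriv ψ y = 1 :=
      hcomp.unique (hasDerivAt_id y)
    have hpos : 0 < Real.sqrt (f (ψ y) / g (ψ y)) :=
      Real.sqrt_pos.mpr (div_pos (hfpos _) (hgpos _))
    have h2 : deriv ψ y = Real.sqrt (g (ψ y) / f (ψ y)) := by
      have : deriv ψ y = (Real.sqrt (f (ψ y) / g (ψ y)))⁻¹ := by
        field_simp at h1 ⊢; linarith [h1]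
      rw [this, ← Real.sqrt_inv, inv_div]
    rwa [h2] at hψd
  intro t y
  -- inner derivative of uT in space
  have hinner : ∀ z, HasDerivAt (fun z' => uT t z')
      (m * (deriv (fun x => u t x) (ψ z) * Real.sqrt (g (ψ z) / f (ψ z)))) z := by
    intro z
    have h1 : HasDerivAt (fun z' => u t (ψ z'))
        (deriv (fun x => u t x) (ψ z) * Real.sqrt (g (ψ z) / f (ψ z))) z :=
      (((hut t).differentiable (by simp) (ψ z)).hasDerivAt).comp z (hψ' z)
    have h2 := h1.const_mul m
    have : (fun z' => uT t z') = fun z' => m * u t (ψ z') := funext (huT t)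
    rw [this]; exact h2
  -- pointwise identity for the flux term
  have hflux : ∀ z, fT z * deriv (fun z' => uT t z') z
      = m * (g (ψ z) * deriv (fun x => u t x) (ψ z)) := by
    intro z
    rw [(hinner z).deriv, hfT]
    have hfz := hfpos (ψ z); have hgz := hgpos (ψ z)
    rw [Real.sqrt_mul hfz.le, Real.sqrt_div hgz.le]
    have ha : Real.sqrt (f (ψ z)) * Real.sqrt (f (ψ z)) = f (ψ z) :=
      Real.mul_self_sqrt hfz.le
    have ha0 : (0:ℝ) < Real.sqrt (f (ψ z)) := Real.sqrt_pos.mpr hfz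
    have hb : Real.sqrt (g (ψ z)) * Real.sqrt (g (ψ z)) = g (ψ z) :=
      Real.mul_self_sqrt hgz.le
    field_simp
    linear_combination deriv (fun x => u t x) (ψ z) * hb
  -- derivative of the flux term
  have hP : ContDiff ℝ ((⊤:ℕ∞):WithTop ℕ∞) (fun x => g x * deriv (fun x' => u t x') x) :=
    (hg.of_le (by simp)).mul (hux t)
  have houter : HasDerivAt (fun z => fT z * deriv (fun z' => uT t z') z)
      (m * (deriv (fun x => g x * deriv (fun x' => u t x') x) (ψ y)
        * Real.sqrt (g (ψ y) / f (ψ y)))) y := by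
    have h1 : HasDerivAt (fun z => g (ψ z) * deriv (fun x => u t x) (ψ z))
        (deriv (fun x => g x * deriv (fun x' => u t x') x) (ψ y)
          * Real.sqrt (g (ψ y) / f (ψ y))) y :=
      ((hP.differentiable (by simp) (ψ y)).hasDerivAt).comp y (hψ' y)
    have h2 := h1.const_mul m
    have : (fun z => fT z * deriv (fun z' => uT t z') z)
        = fun z => m * (g (ψ z) * deriv (fun x => u t x) (ψ z)) := funext hflux
    rw [this]; exact h2
  -- time derivative
  have htime : deriv (fun s => uT s y) t = m * deriv (fun s => u s (ψ y)) t := by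
    have : (fun s => uT s y) = fun s => m * u s (ψ y) := by
      funext s; exact huT s y
    rw [this, deriv_const_mul _ ((hus (ψ y)).differentiable (by simp) t)]
  -- assemble
  rw [houter.deriv, htime, hfT, hhT, huT]
  have hpd := hpde t (ψ y)
  set F0 := f (ψ y); set G0 := g (ψ y); set H0 := h (ψ y)
  set U := deriv (fun s => u s (ψ y)) t
  set P := deriv (fun x => g x * deriv (fun x' => u t x') x) (ψ y)
  set E := Real.exp (m * u t (ψ y))
  have hF0 : 0 < F0 := hfpos _
  have hG0 : 0 < G0 := hgpos _
  have ha : Real.sqrt F0 * Real.sqrt F0 = F0 := Real.mul_self_sqrt hF0.le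
  have ha0 : (0:ℝ) < Real.sqrt F0 := Real.sqrt_pos.mpr hF0
  have hb : Real.sqrt G0 * Real.sqrt G0 = G0 := Real.mul_self_sqrt hG0.le
  rw [Real.sqrt_mul hF0.le, Real.sqrt_div hG0.le]
  -- hpd : F0 * U = P + H0 * E
  have hP' : P = F0 * U - H0 * E := by linarith [hpd]
  rw [hP']
  field_simp
  linear_combination U * ha
end
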